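/- Let c_1,…,c_n be reals with c_1 = 0 and let d_1,…,d_n be reals with d_1 = d_n = 1. Set A = F·D. Then for every 1 ≤ i ≤ n, Σ_{j=1}^{n} A_{ij} = c_i; that is, the row sums of A equal the nodes c_i. -/

import Mathlib

open Finset Matrix
/-- The matrix `D` with entries `d_{ij}`: `0` for `i < j`, `d_i` for `i = j`, and
`-d_j · (∏_{k=j+1}^{i-1} (1 - d_k)) · d_i` for `i > j`. -/
def Dmat (n : ℕ) (d : Fin n → ℝ) : Matrix (Fin n) (Fin n) ℝ :=
  Matrix.of fun i j =>
    if i < j then 0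
    else if i = j then d i
    else -(d j) * (∏ k ∈ Finset.Ioo j i, (1 - d k)) * d i

/-- The matrix `F` with `F_{ij} = c_i - c_j` for `i > j` and `0` otherwise. -/
def Fmat (n : ℕ) (c : Fin n → ℝ) : Matrix (Fin n) (Fin n) ℝ :=
  Matrix.of fun i j => if j < i then c i - c j else 0

/-!
Row `k` of `D` sums to `d_k ∏_{j<k} (1 - d_j)`: this is the telescoping identity
`∑_{j<k} d_j ∏_{j<m<k} (1 - d_m) = 1 - ∏_{j<k} (1 - d_j)`, obtained by expanding
`1 = ∏_{j<k} ((1 - d_j) + d_j)` according to the last index at which `d_j` is chosen.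
Since `d_1 = 1`, the row sums of `D` form the first unit vector, so the row sums of `F D`
are the first column of `F`, namely `c_i - c_1 = c_i`.
-/

theorem Finset.sum_Iio_mul_prod_Ioo_one_sub {ι R : Type*} [LinearOrder ι]
    [LocallyFiniteOrder ι] [LocallyFiniteOrderBot ι] [CommRing R] (f : ι → R) (k : ι) :
    ∑ j ∈ Iio k, f j * ∏ m ∈ Ioo j k, (1 - f m) = 1 - ∏ j ∈ Iio k, (1 - f j) := by
  have h := prod_add_ordered (Iio k) (fun j => 1 - f j) f
  simp only [sub_add_cancel, prod_const_one, mul_one] at h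
  have hIoo : ∀ j ∈ Iio k, {m ∈ Iio k | j < m} = Ioo j k := fun j _ => by
    ext m; simp [and_comm]
  rw [sum_congr rfl fun j hj => by rw [hIoo j hj]] at h
  linear_combination -h

theorem Dmat_mulVec_one (n : ℕ) (d : Fin n → ℝ) :
    Dmat n d *ᵥ 1 = fun k => d k * ∏ j ∈ Iio k, (1 - d j) := by
  ext k
  have hupper : ∑ j, Dmat n d k j = ∑ j ∈ Iic k, Dmat n d k j := by
    refine (sum_subset (subset_univ _) fun j _ hj => ?_).symm
    simp [Dmat, not_le.mp (mem_Iic.not.mp hj)]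
  have hlower : ∀ j ∈ Iio k, Dmat n d k j = -(d j * ∏ m ∈ Ioo j k, (1 - d m)) * d k :=
    fun j hj => by
      have hj : j < k := mem_Iio.mp hj
      simp [Dmat, hj.ne', not_lt_of_gt hj]
  have hdiag : Dmat n d k k = d k := by simp [Dmat]
  calc (Dmat n d *ᵥ 1) k = ∑ j ∈ Iic k, Dmat n d k j := by
        simp [mulVec, dotProduct, hupper]
    _ = d k - (∑ j ∈ Iio k, d j * ∏ m ∈ Ioo j k, (1 - d m)) * d k := by
        rw [← Iio_insert, sum_insert (by simp), hdiag, sum_congr rfl hlower, ← sum_mul,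
          sum_neg_distrib]
        ring
    _ = d k * ∏ j ∈ Iio k, (1 - d j) := by
        rw [sum_Iio_mul_prod_Ioo_one_sub]
        ring

theorem Dmat_mulVec_one_of_head_eq_one (n : ℕ) (hn : 0 < n) (d : Fin n → ℝ)
    (hd : d ⟨0, hn⟩ = 1) : Dmat n d *ᵥ 1 = Pi.single ⟨0, hn⟩ 1 := by
  rw [Dmat_mulVec_one]
  ext k
  by_cases hk : k = ⟨0, hn⟩
  · subst hk
    have hempty : Iio (⟨0, hn⟩ : Fin n) = ∅ := by
      ext j; simp [Fin.lt_def]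
    simp [hd, hempty]
  · have hzero : (⟨0, hn⟩ : Fin n) ∈ Iio k := by
      simpa [Fin.lt_def, Fin.ext_iff, Nat.pos_iff_ne_zero] using hk
    have hprod : ∏ j ∈ Iio k, (1 - d j) = 0 := prod_eq_zero hzero (by simp [hd])
    simp [hprod, hk]

theorem Fmat_mulVec_single_head (n : ℕ) (hn : 0 < n) (c : Fin n → ℝ) :
    Fmat n c *ᵥ Pi.single ⟨0, hn⟩ 1 = fun i => c i - c ⟨0, hn⟩ := by
  ext i
  rw [mulVec_single_one]
  by_cases hi : (⟨0, hn⟩ : Fin n) < i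
  · simp [Fmat, hi]
  · have : i = ⟨0, hn⟩ := by simpa [Fin.lt_def, Fin.ext_iff] using hi
    simp [Fmat, this]

theorem stmt_11 (n : ℕ) (hn : 2 ≤ n) (c d : Fin n → ℝ)
    (hc1 : c ⟨0, by omega⟩ = 0)
    (hd1 : d ⟨0, by omega⟩ = 1) :
    ∀ i : Fin n, ∑ j : Fin n, (Fmat n c * Dmat n d) i j = c i := by
  intro i
  have hrow : ∑ j, (Fmat n c * Dmat n d) i j = ((Fmat n c * Dmat n d) *ᵥ 1) i := by
    simp [mulVec, dotProduct]
  rw [hrow, ← mulVec_mulVec, Dmat_mulVec_one_of_head_eq_one n (by omega) d hd1,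
    Fmat_mulVec_single_head, hc1]
  exact sub_zero _
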